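/- arXiv:2505.09162 — 3 statements merged into one kernel-verified Lean document; each statement's English description precedes it below -/
import Mathlib

section
/- Let γ_f > 1 and f(α) = 1 - cos(α) - α²/(2γ_f). If γ_f < 2π, then f has exactly three real roots: {-α*, 0, α*} for some α* > 0. -/
/-!
Writing `α = 2β` and `c = √γ_f`, the half-angle formula `1 - cos α = 2 sin² β` turns `f α = 0` into
`|c sin β| = |β|`. Since `1 < c ≤ π`, a positive solution lies in `(0, π]`, where it solves
`c sin β = β`. On `[0, π]` the function `c sin β - β` increases up to `arccos (1/c)` and decreases
afterwards; it vanishes at `0` and is negative at `π`, so it has exactly one zero in `(0, π]`.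
-/

open Real Set

theorem hasDerivAt_mul_sin_sub_self (c x : ℝ) :
    HasDerivAt (fun β => c * sin β - β) (c * cos x - 1) x :=
  ((hasDerivAt_sin x).const_mul c).sub (hasDerivAt_id' x)

section MulSinSubSelf

variable {c : ℝ}

theorem strictMonoOn_mul_sin_sub_self (hc : 1 ≤ c) :
    StrictMonoOn (fun β => c * sin β - β) (Icc 0 (arccos c⁻¹)) := by
  have hc0 : 0 < c := by linarith
  refine strictMonoOn_of_deriv_pos (convex_Icc _ _) (by fun_prop) fun x hx => ?_
  rw [interior_Icc] at hx
  have hcos : c⁻¹ < cos x := by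
    rw [← cos_arccos (by linarith [inv_pos.2 hc0]) (inv_le_one_of_one_le₀ hc)]
    exact strictAntiOn_cos ⟨hx.1.le, by linarith [hx.2, arccos_le_pi c⁻¹]⟩
      ⟨arccos_nonneg _, arccos_le_pi _⟩ hx.2
  rw [(hasDerivAt_mul_sin_sub_self c x).deriv]
  have := mul_lt_mul_of_pos_left hcos hc0
  rw [mul_inv_cancel₀ hc0.ne'] at this
  linarith

theorem strictAntiOn_mul_sin_sub_self (hc : 1 ≤ c) :
    StrictAntiOn (fun β => c * sin β - β) (Icc (arccos c⁻¹) π) := by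
  have hc0 : 0 < c := by linarith
  refine strictAntiOn_of_deriv_neg (convex_Icc _ _) (by fun_prop) fun x hx => ?_
  rw [interior_Icc] at hx
  have hcos : cos x < c⁻¹ := by
    rw [← cos_arccos (by linarith [inv_pos.2 hc0]) (inv_le_one_of_one_le₀ hc)]
    exact strictAntiOn_cos ⟨arccos_nonneg _, arccos_le_pi _⟩
      ⟨by linarith [hx.1, arccos_nonneg c⁻¹], hx.2.le⟩ hx.1
  rw [(hasDerivAt_mul_sin_sub_self c x).deriv]
  have := mul_lt_mul_of_pos_left hcos hc0
  rw [mul_inv_cancel₀ hc0.ne'] at this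
  linarith

theorem exists_mul_sin_eq_self_iff (hc : 1 < c) :
    ∃ b ∈ Ioo 0 π, ∀ β ∈ Ioc 0 π, c * sin β = β ↔ β = b := by
  set g : ℝ → ℝ := fun β => c * sin β - β
  set β₀ := arccos c⁻¹
  have hβ₀ : 0 < β₀ := arccos_pos.2 (inv_lt_one_of_one_lt₀ hc)
  have hmono := strictMonoOn_mul_sin_sub_self hc.le
  have hanti := strictAntiOn_mul_sin_sub_self hc.le
  have hg0 : g 0 = 0 := by simp [g]
  have hgπ : g π = -π := by simp [g]
  have hgβ₀ : 0 < g β₀ := hg0 ▸ hmono ⟨le_rfl, hβ₀.le⟩ ⟨hβ₀.le, le_rfl⟩ hβ₀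
  obtain ⟨b, hb, hgb⟩ := intermediate_value_Icc' (arccos_le_pi _)
    (by fun_prop : Continuous g).continuousOn ⟨by linarith [hgπ, pi_pos], hgβ₀.le⟩
  have hbπ : b ≠ π := by
    rintro rfl
    linarith [hgπ, pi_pos]
  refine ⟨b, ⟨hβ₀.trans_le hb.1, hb.2.lt_of_ne hbπ⟩, fun β hβ => ⟨fun h => ?_, ?_⟩⟩
  · have hgβ : g β = 0 := sub_eq_zero.2 h
    rcases le_or_gt β β₀ with hle | hlt
    · have := hmono ⟨le_rfl, hβ₀.le⟩ ⟨hβ.1.le, hle⟩ hβ.1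
      linarith
    · exact hanti.injOn ⟨hlt.le, hβ.2⟩ hb (hgβ.trans hgb.symm)
  · rintro rfl
    exact sub_eq_zero.1 hgb

theorem abs_mul_sin_eq_self_iff {β : ℝ} (hc : 0 ≤ c) (hcπ : c ≤ π) (hβ : 0 ≤ β) :
    |c * sin β| = β ↔ β ≤ π ∧ c * sin β = β := by
  constructor
  · intro h
    have hβπ : β ≤ π :=
      calc β = |c * sin β| := h.symm
        _ = c * |sin β| := by rw [abs_mul, abs_of_nonneg hc]
        _ ≤ c * 1 := mul_le_mul_of_nonneg_left (abs_sin_le_one β) hc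
        _ ≤ π := by linarith
    refine ⟨hβπ, ?_⟩
    rwa [abs_of_nonneg (mul_nonneg hc (sin_nonneg_of_nonneg_of_le_pi hβ hβπ))] at h
  · rintro ⟨-, h⟩
    rw [h, abs_of_nonneg hβ]

theorem exists_abs_mul_sin_eq_abs_iff (hc : 1 < c) (hcπ : c ≤ π) :
    ∃ b > 0, ∀ β, |c * sin β| = |β| ↔ β = -b ∨ β = 0 ∨ β = b := by
  obtain ⟨b, hb, hroot⟩ := exists_mul_sin_eq_self_iff hc
  have hpos : ∀ β > 0, |c * sin β| = β ↔ β = b := fun β hβ => by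
    rw [abs_mul_sin_eq_self_iff (by linarith) hcπ hβ.le]
    constructor
    · rintro ⟨hβπ, h⟩
      exact (hroot β ⟨hβ, hβπ⟩).1 h
    · rintro rfl
      exact ⟨hb.2.le, (hroot β ⟨hβ, hb.2.le⟩).2 rfl⟩
  refine ⟨b, hb.1, fun β => ?_⟩
  rcases lt_trichotomy β 0 with hβ | rfl | hβ
  · have h := hpos (-β) (neg_pos.2 hβ)
    rw [sin_neg, mul_neg, abs_neg] at h
    rw [abs_of_neg hβ, h]
    refine ⟨fun h => Or.inl (by linarith), ?_⟩
    rintro (h | h | h) <;> linarith [hb.1]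
  · simp
  · rw [abs_of_pos hβ, hpos β hβ]
    refine ⟨fun h => Or.inr (Or.inr h), ?_⟩
    rintro (h | h | h) <;> linarith [hb.1]

end MulSinSubSelf

theorem one_sub_cos_sub_sq_div_eq_zero_iff {γ : ℝ} (hγ : 0 < γ) (α : ℝ) :
    1 - cos α - α ^ 2 / (2 * γ) = 0 ↔ |√γ * sin (α / 2)| = |α / 2| := by
  have hhalf : 1 - cos α = 2 * sin (α / 2) ^ 2 := by
    rw [sin_sq_eq_half_sub, mul_div_cancel₀ α two_ne_zero]
    ring
  rw [← sq_eq_sq_iff_abs_eq_abs, mul_pow, sq_sqrt hγ.le, hhalf]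
  field_simp
  constructor <;> intro h <;> linarith

theorem exactly_three_roots
    (γf : ℝ) (hγ : 1 < γf) (hγ' : γf < 2 * Real.pi) :
    let f : ℝ → ℝ := fun α => 1 - Real.cos α - α ^ 2 / (2 * γf)
    ∃ αstar : ℝ, 0 < αstar ∧
      {α : ℝ | f α = 0} = {-αstar, 0, αstar} := by
  intro f
  have hc : 1 < √γf := by
    rw [lt_sqrt zero_le_one]
    linarith
  have hcπ : √γf ≤ π := by
    rw [sqrt_le_left pi_pos.le]
    nlinarith [pi_gt_three]
  obtain ⟨b, hb, hroots⟩ := exists_abs_mul_sin_eq_abs_iff hc hcπ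
  refine ⟨2 * b, by positivity, ?_⟩
  ext α
  simp only [f, mem_ofPred_eq, one_sub_cos_sub_sq_div_eq_zero_iff (by linarith : 0 < γf), hroots,
    mem_insert_iff, mem_singleton_iff]
  constructor <;> rintro (h | h | h) <;> grind
end

section
/- Let γ_f > 1 and let α* ∈ (0, π) be the unique root of sin(α)/α = γ_f^{-1/4} in (0, π). Let N₁, N₂ be positive integers. If z̄_i ∈ [-2α*/N_i, 2α*/N_i] for i = 1,2, then ∏_{i=1,2} (1/N_i)·|sin(N_i z̄_i / 2)| / |sin(z̄_i / 2)| ≥ 1/√(γ_f), where the factor is interpreted as 1 when z̄_i = 0. -/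
/-! With `t = N |z| / 2 ≤ α*`, the bounds `|sin (z/2)| ≤ |z|/2` and the monotonicity of
`sin t / t` on `(0, π]` (a secant slope of the concave function `sin` through the origin) give
`dirichletFactor N z ≥ sin t / t ≥ sin α* / α* = γ_f^(-1/4)`; multiplying the two factors gives
`γ_f^(-1/2)`. -/

open Real

/-- Normalized Dirichlet-kernel magnitude of an `N`-element array, interpreted as `1` at `z = 0`. -/
noncomputable def dirichletFactor (N : ℕ) (z : ℝ) : ℝ :=
  if z = 0 then 1 else (1 / (N : ℝ)) * |Real.sin (N * z / 2)| / |Real.sin (z / 2)|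

lemma sin_div_le_sin_div_of_le {t α : ℝ} (ht : 0 < t) (htα : t ≤ α) (hα : α ≤ π) :
    sin α / α ≤ sin t / t := by
  rcases htα.eq_or_lt with rfl | htα
  · rfl
  have hslope := strictConcaveOn_sin_Icc.secant_strict_mono (a := 0)
    ⟨le_rfl, pi_pos.le⟩ ⟨ht.le, htα.le.trans hα⟩ ⟨ht.le.trans htα.le, hα⟩ ht.ne' (ht.trans htα).ne'
    htα
  simpa only [sin_zero, sub_zero] using hslope.le

lemma sin_div_le_dirichletFactor {α : ℝ} (hα : α ∈ Set.Ioo 0 π) {N : ℕ} (hN : 0 < N) {z : ℝ}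
    (hz : |z| ≤ 2 * α / N) : sin α / α ≤ dirichletFactor N z := by
  obtain ⟨hα0, hαπ⟩ := hα
  rw [dirichletFactor]
  split_ifs with hz0
  · exact (div_le_one hα0).mpr (sin_le hα0.le)
  have hNpos : (0 : ℝ) < N := Nat.cast_pos.mpr hN
  have hN1 : (1 : ℝ) ≤ N := Nat.one_le_cast.mpr hN
  set u := |z| / 2 with hu
  have hu0 : 0 < u := by positivity
  have hNuα : N * u ≤ α := by
    rw [le_div_iff₀ hNpos] at hz
    rw [hu]
    linarith
  have huα : u ≤ α := by nlinarith
  have hNz : |(N : ℝ) * z / 2| = N * u := by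
    rw [abs_div, abs_mul, Nat.abs_cast, abs_two, mul_div_assoc]
  have hz2 : |z / 2| = u := by rw [abs_div, abs_two]
  have hsin_half_pos : 0 < |sin (z / 2)| := by
    rw [abs_sin_eq_sin_abs_of_abs_le_pi (by linarith), hz2]
    exact sin_pos_of_pos_of_lt_pi hu0 (by linarith)
  have hsin_half_le : |sin (z / 2)| ≤ u := hz2 ▸ abs_sin_le_abs
  calc sin α / α ≤ sin (N * u) / (N * u) := sin_div_le_sin_div_of_le (by positivity) hNuα hαπ.le
    _ = |sin (N * z / 2)| / (N * u) := by
      rw [abs_sin_eq_sin_abs_of_abs_le_pi (by linarith), hNz]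
    _ ≤ |sin (N * z / 2)| / (N * |sin (z / 2)|) := by gcongr
    _ = 1 / N * |sin (N * z / 2)| / |sin (z / 2)| := by field_simp

lemma rpow_neg_one_div_four_mul_self {x : ℝ} (hx : 0 ≤ x) :
    x ^ (-(1 / 4 : ℝ)) * x ^ (-(1 / 4 : ℝ)) = 1 / √x := by
  rw [← rpow_add' hx (by norm_num), sqrt_eq_rpow, one_div (x ^ (1 / 2 : ℝ)), ← rpow_neg hx]
  norm_num

theorem ura_gain_ratio_bound
    (γf : ℝ) (hγ : 1 < γf)
    (αstar : ℝ) (hα : αstar ∈ Set.Ioo 0 Real.pi)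
    (hroot : Real.sin αstar / αstar = γf ^ (-(1 / 4 : ℝ)))
    (N₁ N₂ : ℕ) (hN₁ : 0 < N₁) (hN₂ : 0 < N₂)
    (z₁ z₂ : ℝ)
    (hz₁ : z₁ ∈ Set.Icc (-(2 * αstar / N₁)) (2 * αstar / N₁))
    (hz₂ : z₂ ∈ Set.Icc (-(2 * αstar / N₂)) (2 * αstar / N₂)) :
    dirichletFactor N₁ z₁ * dirichletFactor N₂ z₂ ≥ 1 / Real.sqrt γf := by
  have hγ0 : 0 ≤ γf := by linarith
  have hc : 0 ≤ γf ^ (-(1 / 4 : ℝ)) := rpow_nonneg hγ0 _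
  have h₁ := hroot ▸ sin_div_le_dirichletFactor hα hN₁ (abs_le.mpr hz₁)
  have h₂ := hroot ▸ sin_div_le_dirichletFactor hα hN₂ (abs_le.mpr hz₂)
  calc 1 / √γf = γf ^ (-(1 / 4 : ℝ)) * γf ^ (-(1 / 4 : ℝ)) :=
        (rpow_neg_one_div_four_mul_self hγ0).symm
    _ ≤ dirichletFactor N₁ z₁ * dirichletFactor N₂ z₂ := mul_le_mul h₁ h₂ hc (hc.trans h₁)
end

section
/- Fix γ_f > 1 and let α* be the smallest positive root of 1 - cos(α) = α²/(2γ_f). For every ε > 0 there exists N₀ such that for all integers N ≥ N₀ and all z ∈ [-(α*-ε)/N, (α*-ε)/N], the inequality cos(z) - (γ_f/N²)(cos(Nz) - 1) - 1 ≥ 0 holds. -/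
open Real

/-!
Because `αstar` is the first positive root and `1 - cos x > x²/(2γ)` just to the right of `0`
(as `γ > 1`), the intermediate value theorem gives `x²/(2γ) ≤ 1 - cos x` on `(-αstar, αstar)`.
At `x = N z` this says `(γ/N²)(1 - cos (N z)) ≥ z²/2`, and `cos z ≥ 1 - z²/2` finishes.
So no asymptotics are needed: `N₀ = 1` works.
-/

open Filter Topology in
theorem eventually_sq_div_lt_one_sub_cos {γ : ℝ} (hγ : 1 < γ) :
    ∀ᶠ x in 𝓝[>] 0, x ^ 2 / (2 * γ) < 1 - cos x := by
  have hgap : 0 < 1 / 2 - 1 / (2 * γ) := by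
    rw [sub_pos]; exact one_div_lt_one_div_of_lt two_pos (by linarith)
  have hsmall : ∀ᶠ x in 𝓝 (0 : ℝ), x ^ 2 * (5 / 48) < 1 / 2 - 1 / (2 * γ) := by
    refine (Continuous.tendsto (by fun_prop) 0).eventually (gt_mem_nhds ?_)
    simpa using hgap
  filter_upwards [nhdsWithin_le_nhds hsmall, nhdsWithin_le_nhds (Iic_mem_nhds one_pos),
    self_mem_nhdsWithin] with x hx hx1 (hx0 : 0 < x)
  -- `cos_bound` is the Taylor estimate `cos x ≤ 1 - x²/2 + 5x⁴/96` for `|x| ≤ 1`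
  have htaylor := (abs_le.1 (cos_bound (x := x) (by rwa [abs_of_pos hx0]))).2
  rw [abs_of_pos hx0] at htaylor
  have hx2 : 0 < x ^ 2 := by positivity
  have : x ^ 2 / (2 * γ) = x ^ 2 * (1 / (2 * γ)) := by ring
  nlinarith

theorem sq_div_le_one_sub_cos_of_abs_lt {γ α β : ℝ} (hγ : 1 < γ)
    (hmin : ∀ β : ℝ, 0 < β → 1 - cos β = β ^ 2 / (2 * γ) → α ≤ β) (hβ : |β| < α) :
    β ^ 2 / (2 * γ) ≤ 1 - cos β := by
  rw [← sq_abs, ← cos_abs]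
  obtain hb | hb := (abs_nonneg β).eq_or_lt
  · simp [← hb]
  generalize |β| = b at hb hβ ⊢
  by_contra! hneg
  obtain ⟨δ, hδ, hδb⟩ := ((eventually_sq_div_lt_one_sub_cos hγ).and
    (Ioo_mem_nhdsGT hb)).exists
  set f : ℝ → ℝ := fun x => 1 - cos x - x ^ 2 / (2 * γ)
  have hcont : ContinuousOn f (Set.Icc δ b) := by fun_prop
  have hsign : (0 : ℝ) ∈ Set.Icc (f b) (f δ) :=
    ⟨by simp only [f]; linarith, by simp only [f]; linarith⟩
  obtain ⟨r, hr, hroot⟩ := intermediate_value_Icc' hδb.2.le hcont hsign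
  have := hmin r (hδb.1.trans_le hr.1) (by simp only [f] at hroot; linarith)
  linarith [hr.2]

theorem cos_sub_div_sq_mul_cos_mul_sub_one_nonneg {γ N z : ℝ} (hγ : 0 < γ) (hN : N ≠ 0)
    (h : (N * z) ^ 2 / (2 * γ) ≤ 1 - cos (N * z)) :
    0 ≤ cos z - γ / N ^ 2 * (cos (N * z) - 1) - 1 := by
  have hscaled : z ^ 2 / 2 ≤ γ / N ^ 2 * (1 - cos (N * z)) :=
    calc z ^ 2 / 2 = γ / N ^ 2 * ((N * z) ^ 2 / (2 * γ)) := by field_simp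
      _ ≤ γ / N ^ 2 * (1 - cos (N * z)) := by gcongr
  linarith [one_sub_sq_div_two_le_cos (x := z)]

theorem asymptotic_lemma1_general
    (γf : ℝ) (hγ : 1 < γf) (αstar : ℝ)
    (hmin : ∀ β : ℝ, 0 < β → 1 - Real.cos β = β ^ 2 / (2 * γf) → αstar ≤ β) :
    ∀ ε > 0, ∃ N₀ : ℕ, ∀ N : ℕ, N₀ ≤ N →
      ∀ z ∈ Set.Icc (-((αstar - ε) / N)) ((αstar - ε) / N),
        Real.cos z - (γf / (N : ℝ) ^ 2) * (Real.cos (N * z) - 1) - 1 ≥ 0 := by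
  intro ε hε
  refine ⟨1, fun N hN z hz => ?_⟩
  have hN0 : (0 : ℝ) < N := by exact_mod_cast hN
  have hNz : |N * z| < αstar :=
    calc |N * z| = N * |z| := by rw [abs_mul, Nat.abs_cast]
      _ ≤ αstar - ε := (le_div_iff₀' hN0).1 (abs_le.2 hz)
      _ < αstar := by linarith
  exact cos_sub_div_sq_mul_cos_mul_sub_one_nonneg (by linarith) hN0.ne'
    (sq_div_le_one_sub_cos_of_abs_lt hγ hmin hNz)

theorem asymptotic_lemma1
    (γf : ℝ) (hγ : 1 < γf) (αstar : ℝ) (hpos : 0 < αstar)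
    (hroot : 1 - Real.cos αstar = αstar ^ 2 / (2 * γf))
    (hmin : ∀ β : ℝ, 0 < β → 1 - Real.cos β = β ^ 2 / (2 * γf) → αstar ≤ β) :
    ∀ ε > 0, ∃ N₀ : ℕ, ∀ N : ℕ, N₀ ≤ N →
      ∀ z ∈ Set.Icc (-((αstar - ε) / N)) ((αstar - ε) / N),
        Real.cos z - (γf / (N : ℝ) ^ 2) * (Real.cos (N * z) - 1) - 1 ≥ 0 :=
  asymptotic_lemma1_general γf hγ αstar hmin
end
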